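/- For a qubit state ρ with purity P and Pauli observables A = a·σ, B = b·σ, the average over uniformly random unit vectors a, b of the generalized Robertson bound ((λ_max+λ_min)²/(4(λ_max−λ_min)²))|Tr(ρ[A,B])|² equals 2/9, independent of P (for ρ not maximally mixed). -/

import Mathlib

/-!
Write `ρ = (1 + r·σ) / 2` with Bloch vector `r`. The trace and determinant of `ρ` give
`λ_max + λ_min = 1` and `(λ_max - λ_min)² = ‖r‖²`, and `[a·σ, b·σ] = 2i (a × b)·σ`, so the
integrand is `⟪r × a, b⟫² / ‖r‖²`. Reflections preserve the normalized Hausdorff measure on the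
sphere and exchange any two vectors of equal length; summing over an orthonormal basis then gives
`E ⟪v, x⟫² = ‖v‖² / 3`. The inner average is therefore
`‖r × a‖² / (3‖r‖²) = (1 - ⟪r, a⟫² / ‖r‖²) / 3`, whose average is `2 / 9`.
The normalization is legitimate because `0 < μH[2] S² < ∞`: `S²` is the image of a square under
the Lipschitz spherical-coordinate map, and its 1-Lipschitz projection to the plane contains a
square.
-/

open Matrix MeasureTheory ComplexOrder

noncomputable def pauli : Fin 3 → Matrix (Fin 2) (Fin 2) ℂ :=
  ![!![0, 1; 1, 0], !![0, -Complex.I; Complex.I, 0], !![1, 0; 0, -1]]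

/-- A Pauli observable `a · σ` for a direction vector `a ∈ ℝ³`. -/
noncomputable def pauliObs (a : EuclideanSpace ℝ (Fin 3)) : Matrix (Fin 2) (Fin 2) ℂ :=
  ∑ i, (a i : ℂ) • pauli i

open Metric Module WithLp Complex
open scoped RealInnerProductSpace ENNReal

noncomputable def euclideanCross (a b : EuclideanSpace ℝ (Fin 3)) : EuclideanSpace ℝ (Fin 3) :=
  toLp 2 (ofLp a ⨯₃ ofLp b)

theorem inner_euclideanCross_right (u v w : EuclideanSpace ℝ (Fin 3)) :
    ⟪u, euclideanCross v w⟫ = ⟪euclideanCross u v, w⟫ := by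
  simp only [euclideanCross, EuclideanSpace.inner_eq_star_dotProduct, star_trivial]
  rw [dotProduct_comm, triple_product_permutation, triple_product_permutation]

theorem norm_euclideanCross_sq (u v : EuclideanSpace ℝ (Fin 3)) :
    ‖euclideanCross u v‖ ^ 2 = ‖u‖ ^ 2 * ‖v‖ ^ 2 - ⟪u, v⟫ ^ 2 := by
  simp_rw [norm_sq_eq_re_inner (𝕜 := ℝ), euclideanCross, EuclideanSpace.inner_eq_star_dotProduct,
    star_trivial, RCLike.re_to_real, cross_dot_cross, dotProduct_comm (ofLp v) (ofLp u), sq]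

section Pauli

theorem pauliObs_eq (a : EuclideanSpace ℝ (Fin 3)) :
    pauliObs a = !![(a 2 : ℂ), a 0 - a 1 * I; a 0 + a 1 * I, -(a 2 : ℂ)] := by
  ext i j
  fin_cases i <;> fin_cases j <;> simp [pauliObs, pauli, Fin.sum_univ_three, sub_eq_add_neg]

theorem pauliObs_mul_sub_mul (a b : EuclideanSpace ℝ (Fin 3)) :
    pauliObs a * pauliObs b - pauliObs b * pauliObs a =
      (2 * I) • pauliObs (euclideanCross a b) := by
  simp only [pauliObs_eq, euclideanCross]
  ext i j
  fin_cases i <;> fin_cases j <;> simp [crossProduct] <;> ring_nf <;> simp [I_sq] <;> ring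

theorem det_one_add_pauliObs (v : EuclideanSpace ℝ (Fin 3)) :
    (1 + pauliObs v).det = ((1 - ‖v‖ ^ 2 : ℝ) : ℂ) := by
  rw [EuclideanSpace.norm_sq_eq, pauliObs_eq, det_fin_two, Fin.sum_univ_three]
  simp only [Matrix.add_apply, one_apply_eq, of_apply, cons_val', cons_val_zero, cons_val_fin_one,
    cons_val_one, ne_eq, zero_ne_one, not_false_eq_true, one_apply_ne, zero_add, one_ne_zero,
    Real.norm_eq_abs, sq_abs, ofReal_sub, ofReal_one, ofReal_add, ofReal_pow]
  linear_combination (v 1 : ℂ) ^ 2 * I_sq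

theorem pauli_isHermitian (i : Fin 3) : (pauli i).IsHermitian := by
  fin_cases i <;> ext j k <;> fin_cases j <;> fin_cases k <;> simp [pauli]

theorem Matrix.IsHermitian.star_trace_mul {n R : Type*} [Fintype n] [CommSemiring R] [StarRing R]
    {A B : Matrix n n R} (hA : A.IsHermitian) (hB : B.IsHermitian) : star (A * B).trace = (A * B).trace := by
  rw [← trace_conjTranspose, conjTranspose_mul, hA.eq, hB.eq, trace_mul_comm]

noncomputable def blochVector (ρ : Matrix (Fin 2) (Fin 2) ℂ) : EuclideanSpace ℝ (Fin 3) :=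
  toLp 2 fun i => (ρ * pauli i).trace.re

variable {ρ : Matrix (Fin 2) (Fin 2) ℂ}

theorem trace_mul_pauliObs (hρ : ρ.IsHermitian) (v : EuclideanSpace ℝ (Fin 3)) :
    (ρ * pauliObs v).trace = ⟪blochVector ρ, v⟫ := by
  have hre : ∀ i, ((ρ * pauli i).trace.re : ℂ) = (ρ * pauli i).trace := fun i =>
    conj_eq_iff_re.mp (hρ.star_trace_mul (pauli_isHermitian i))
  simp [pauliObs, Matrix.mul_sum, trace_sum, blochVector, EuclideanSpace.inner_eq_star_dotProduct,
    dotProduct, hre, mul_comm]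

theorem norm_trace_mul_commutator_sq (hρ : ρ.IsHermitian) (a b : EuclideanSpace ℝ (Fin 3)) :
    ‖(ρ * (pauliObs a * pauliObs b - pauliObs b * pauliObs a)).trace‖ ^ 2 =
      4 * ⟪euclideanCross (blochVector ρ) a, b⟫ ^ 2 := by
  rw [pauliObs_mul_sub_mul, mul_smul_comm, trace_smul, trace_mul_pauliObs hρ,
    inner_euclideanCross_right]
  norm_num [mul_pow]

theorem eq_blochVector (hρ : ρ.IsHermitian) (htr : ρ.trace = 1) :
    ρ = (1 / 2 : ℂ) • (1 + pauliObs (blochVector ρ)) := by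
  have h00 : (ρ 0 0).im = 0 := conj_eq_iff_im.mp (hρ.apply 0 0)
  have h11 : (ρ 1 1).im = 0 := conj_eq_iff_im.mp (hρ.apply 1 1)
  have h10re : (ρ 1 0).re = (ρ 0 1).re := by rw [← hρ.apply 1 0, star_def, conj_re]
  have h10im : (ρ 1 0).im = -(ρ 0 1).im := by rw [← hρ.apply 1 0, star_def, conj_im]
  have htr' : (ρ 0 0).re + (ρ 1 1).re = 1 := by simpa [trace_fin_two] using congrArg re htr
  ext i j
  fin_cases i <;> fin_cases j <;> apply Complex.ext <;>
    simp [pauliObs_eq, blochVector, pauli, Matrix.mul_apply, trace_fin_two] <;> linarith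

theorem blochVector_ne_zero (hρ : ρ.IsHermitian) (htr : ρ.trace = 1)
    (hmixed : ρ ≠ (1 / 2 : ℂ) • 1) : blochVector ρ ≠ 0 := by
  intro h
  apply hmixed
  rw [eq_blochVector hρ htr, h]
  simp [pauliObs]

theorem Matrix.IsHermitian.eigenvalues_fin_two_of_trace_eq_one (hρ : ρ.IsHermitian)
    (htr : ρ.trace = 1) :
    hρ.eigenvalues 0 + hρ.eigenvalues 1 = 1 ∧
      (hρ.eigenvalues 0 - hρ.eigenvalues 1) ^ 2 = ‖blochVector ρ‖ ^ 2 := by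
  have hsum : hρ.eigenvalues 0 + hρ.eigenvalues 1 = 1 := by
    have h := hρ.trace_eq_sum_eigenvalues
    rw [htr, Fin.sum_univ_two] at h
    apply Complex.ofReal_injective
    push_cast
    exact h.symm
  have hdet : ρ.det = (1 - (‖blochVector ρ‖ : ℂ) ^ 2) / 4 := by
    conv_lhs => rw [eq_blochVector hρ htr]
    rw [det_smul, det_one_add_pauliObs, Fintype.card_fin]
    push_cast
    ring
  have hprod : hρ.eigenvalues 0 * hρ.eigenvalues 1 = (1 - ‖blochVector ρ‖ ^ 2) / 4 := by
    have h := hρ.det_eq_prod_eigenvalues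
    rw [hdet, Fin.prod_univ_two] at h
    apply Complex.ofReal_injective
    push_cast
    exact h.symm
  exact ⟨hsum, by linear_combination (hρ.eigenvalues 0 + hρ.eigenvalues 1 + 1) * hsum - 4 * hprod⟩

end Pauli

theorem isLeast_isGreatest_range_fin_two {f : Fin 2 → ℝ} {lmin lmax : ℝ}
    (hmin : IsLeast (Set.range f) lmin) (hmax : IsGreatest (Set.range f) lmax) :
    lmax + lmin = f 0 + f 1 ∧ (lmax - lmin) ^ 2 = (f 0 - f 1) ^ 2 := by
  have hr : Set.range f = {f 0, f 1} := by
    rw [← Matrix.range_cons_cons_empty (f 0) (f 1) ![]]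
    congr
    ext i
    fin_cases i <;> rfl
  rw [hr] at hmin hmax
  rw [hmin.unique isLeast_pair, hmax.unique isGreatest_pair, max_add_min, max_sub_min_eq_abs,
    sq_abs]
  exact ⟨rfl, by ring⟩

section UniformSphere

variable {E : Type*} [NormedAddCommGroup E] [MeasurableSpace E] [BorelSpace E]

noncomputable def uniformSphere (d : ℝ) : Measure E :=
  (μH[d] (sphere (0 : E) 1))⁻¹ • μH[d].restrict (sphere 0 1)

theorem setAverage_sphere_eq_integral (d : ℝ) (f : E → ℝ) :
    ⨍ x in sphere (0 : E) 1, f x ∂μH[d] = ∫ x, f x ∂uniformSphere d :=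
  setAverage_eq' _ f _

theorem measurePreserving_uniformSphere [NormedSpace ℝ E] (d : ℝ) (e : E ≃ₗᵢ[ℝ] E) :
    MeasurePreserving e (uniformSphere d) (uniformSphere d) := by
  have h := (e.toIsometryEquiv.measurePreserving_hausdorffMeasure d).restrict_preimage
    (isClosed_sphere (x := (0 : E)) (ε := 1)).measurableSet
  rw [LinearIsometryEquiv.coe_toIsometryEquiv, e.preimage_sphere, map_zero] at h
  exact h.smul_measure _

theorem ae_norm_eq_one_uniformSphere (d : ℝ) : ∀ᵐ x ∂(uniformSphere d : Measure E), ‖x‖ = 1 :=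
  Measure.ae_smul_measure ((ae_restrict_mem isClosed_sphere.measurableSet).mono fun x hx => by
    simpa using hx) _

theorem isProbabilityMeasure_uniformSphere {d : ℝ} (h0 : μH[d] (sphere (0 : E) 1) ≠ 0)
    (htop : μH[d] (sphere (0 : E) 1) ≠ ∞) : IsProbabilityMeasure (uniformSphere d : Measure E) :=
  ⟨by simp [uniformSphere, ENNReal.inv_mul_cancel h0 htop]⟩

end UniformSphere

section Isotropy

variable {E : Type*} [NormedAddCommGroup E] [InnerProductSpace ℝ E] [MeasurableSpace E]
  [BorelSpace E] {μ : Measure E}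

theorem integral_inner_sq_eq_of_norm_eq (hμ : ∀ e : E ≃ₗᵢ[ℝ] E, MeasurePreserving e μ μ)
    {u w : E} (h : ‖u‖ = ‖w‖) : ∫ x, ⟪u, x⟫ ^ 2 ∂μ = ∫ x, ⟪w, x⟫ ^ 2 ∂μ := by
  set e := Submodule.reflection (ℝ ∙ (u - w))ᗮ
  have he : ∀ x, ⟪w, e x⟫ = ⟪u, x⟫ := fun x => by
    rw [← Submodule.reflection_sub h, LinearIsometryEquiv.inner_map_map]
  simpa only [he] using (hμ e).integral_comp e.toIsometryEquiv.toHomeomorph.measurableEmbedding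
    fun x => ⟪w, x⟫ ^ 2

theorem integrable_inner_sq [IsFiniteMeasure μ] (hμ : ∀ᵐ x ∂μ, ‖x‖ = 1) (v : E) :
    Integrable (fun x => ⟪v, x⟫ ^ 2) μ := by
  refine .of_bound (by fun_prop) (‖v‖ ^ 2) (hμ.mono fun x hx => ?_)
  rw [Real.norm_eq_abs, abs_pow]
  gcongr
  simpa [hx] using abs_real_inner_le_norm v x

theorem finrank_mul_integral_inner_sq [FiniteDimensional ℝ E] [IsFiniteMeasure μ]
    (hμ : ∀ e : E ≃ₗᵢ[ℝ] E, MeasurePreserving e μ μ) (hS : ∀ᵐ x ∂μ, ‖x‖ = 1) (v : E) :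
    finrank ℝ E * ∫ x, ⟪v, x⟫ ^ 2 ∂μ = ‖v‖ ^ 2 * μ.real Set.univ := by
  have hscale : ∀ w : E, ‖w‖ ^ 2 * ∫ x, ⟪v, x⟫ ^ 2 ∂μ = ‖v‖ ^ 2 * ∫ x, ⟪w, x⟫ ^ 2 ∂μ := by
    intro w
    have := integral_inner_sq_eq_of_norm_eq hμ (u := ‖w‖ • v) (w := ‖v‖ • w)
      (by simp [norm_smul, mul_comm])
    simpa [inner_smul_left, mul_pow, integral_const_mul] using this
  set b := stdOrthonormalBasis ℝ E
  have hsum : ∑ i, ∫ x, ⟪b i, x⟫ ^ 2 ∂μ = μ.real Set.univ := by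
    rw [← integral_finsetSum _ fun i _ => integrable_inner_sq hS (b i),
      integral_congr_ae (hS.mono fun x hx => by simp [b.sum_sq_inner_right, hx] :
        _ =ᵐ[μ] fun _ => (1 : ℝ))]
    simp
  calc (finrank ℝ E : ℝ) * ∫ x, ⟪v, x⟫ ^ 2 ∂μ = ∑ i, ‖b i‖ ^ 2 * ∫ x, ⟪v, x⟫ ^ 2 ∂μ := by
        simp only [b.orthonormal.1, one_pow, one_mul, Finset.sum_const, Finset.card_univ,
          Fintype.card_fin, nsmul_eq_mul]
    _ = ‖v‖ ^ 2 * μ.real Set.univ := by simp_rw [hscale, ← Finset.mul_sum, hsum]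

end Isotropy

theorem mem_sphere_iff_sum_sq (x : EuclideanSpace ℝ (Fin 3)) :
    x ∈ sphere (0 : EuclideanSpace ℝ (Fin 3)) 1 ↔ x 0 ^ 2 + x 1 ^ 2 + x 2 ^ 2 = 1 := by
  rw [mem_sphere_zero_iff_norm, ← pow_eq_one_iff_of_nonneg (norm_nonneg x) two_ne_zero,
    EuclideanSpace.norm_sq_eq, Fin.sum_univ_three]
  simp [Real.norm_eq_abs, sq_abs]

theorem abs_mul_sub_mul_le {a a' b b' : ℝ} (ha' : |a'| ≤ 1) (hb : |b| ≤ 1) :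
    |a * b - a' * b'| ≤ |a - a'| + |b - b'| :=
  calc |a * b - a' * b'| = |(a - a') * b + a' * (b - b')| := by ring_nf
    _ ≤ |a - a'| * |b| + |a'| * |b - b'| := by rw [← abs_mul, ← abs_mul]; exact abs_add_le _ _
    _ ≤ |a - a'| + |b - b'| := by
      gcongr
      · exact mul_le_of_le_one_right (abs_nonneg _) hb
      · exact mul_le_of_le_one_left (abs_nonneg _) ha'

noncomputable def sphericalCoords (u : Fin 2 → ℝ) : EuclideanSpace ℝ (Fin 3) :=
  !₂[Real.sin (u 0) * Real.cos (u 1), Real.sin (u 0) * Real.sin (u 1), Real.cos (u 0)]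

theorem exists_lipschitzWith_sphericalCoords : ∃ K, LipschitzWith K sphericalCoords := by
  have hg : LipschitzWith 2 fun u : Fin 2 → ℝ =>
      ![Real.sin (u 0) * Real.cos (u 1), Real.sin (u 0) * Real.sin (u 1), Real.cos (u 0)] := by
    refine LipschitzWith.of_dist_le_mul fun u v => (dist_pi_le_iff (by positivity)).2 fun i => ?_
    have h0 : |u 0 - v 0| ≤ dist u v := by simpa [Real.dist_eq] using dist_le_pi_dist u v 0
    have h1 : |u 1 - v 1| ≤ dist u v := by simpa [Real.dist_eq] using dist_le_pi_dist u v 1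
    have hs0 := Real.abs_sin_sub_sin_le (u 0) (v 0)
    have hc0 := Real.abs_cos_sub_cos_le (u 0) (v 0)
    have hs1 := Real.abs_sin_sub_sin_le (u 1) (v 1)
    have hc1 := Real.abs_cos_sub_cos_le (u 1) (v 1)
    fin_cases i <;> simp [Real.dist_eq]
    · linarith [abs_mul_sub_mul_le (Real.abs_sin_le_one (v 0)) (Real.abs_cos_le_one (u 1))
        (b' := Real.cos (v 1)) (a := Real.sin (u 0))]
    · linarith [abs_mul_sub_mul_le (Real.abs_sin_le_one (v 0)) (Real.abs_sin_le_one (u 1))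
        (b' := Real.sin (v 1)) (a := Real.sin (u 0))]
    · linarith [dist_nonneg (x := u) (y := v)]
  exact ⟨_, (PiLp.lipschitzWith_toLp 2 _).comp hg⟩

theorem sphere_subset_image_sphericalCoords :
    sphere (0 : EuclideanSpace ℝ (Fin 3)) 1 ⊆ sphericalCoords '' closedBall 0 Real.pi := by
  intro x hx
  rw [mem_sphere_iff_sum_sq] at hx
  set z : ℂ := ⟨x 0, x 1⟩
  have hz : ‖z‖ = Real.sin (Real.arccos (x 2)) := by
    rw [Real.sin_arccos, Complex.norm_def, Complex.normSq_apply]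
    congr 1
    simp only [z]
    linarith
  refine ⟨![Real.arccos (x 2), Complex.arg z], ?_, ?_⟩
  · rw [mem_closedBall_zero_iff, pi_norm_le_iff_of_nonneg Real.pi_pos.le]
    intro i
    fin_cases i
    · simpa [abs_of_nonneg (Real.arccos_nonneg _)] using Real.arccos_le_pi _
    · simpa using Complex.abs_arg_le_pi z
  · ext i
    fin_cases i
    · simp [sphericalCoords, ← hz, z]
    · simp [sphericalCoords, ← hz, z]
    · exact Real.cos_arccos (by nlinarith) (by nlinarith)

theorem hausdorffMeasure_pi_fin_two : (μH[2] : Measure (Fin 2 → ℝ)) = volume := by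
  simpa using hausdorffMeasure_pi_real (ι := Fin 2)

theorem hausdorffMeasure_sphere_ne_top :
    μH[2] (sphere (0 : EuclideanSpace ℝ (Fin 3)) 1) ≠ ∞ := by
  obtain ⟨K, hK⟩ := exists_lipschitzWith_sphericalCoords
  refine ne_top_of_le_ne_top ?_ ((measure_mono sphere_subset_image_sphericalCoords).trans
    (hK.hausdorffMeasure_image_le zero_le_two _))
  rw [hausdorffMeasure_pi_fin_two]
  exact ENNReal.mul_ne_top (by simp) measure_closedBall_lt_top.ne

theorem hausdorffMeasure_sphere_ne_zero :
    μH[2] (sphere (0 : EuclideanSpace ℝ (Fin 3)) 1) ≠ 0 := by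
  set P : EuclideanSpace ℝ (Fin 3) → (Fin 2 → ℝ) := fun x i => x (Fin.castSucc i)
  have hP : LipschitzWith 1 P := LipschitzWith.of_dist_le_mul fun x y =>
    (dist_pi_le_iff (by positivity)).2 fun i => by simpa using PiLp.dist_apply_le x y _
  have hsub : closedBall 0 (1 / 2) ⊆ P '' sphere 0 1 := by
    intro u hu
    rw [mem_closedBall_zero_iff, pi_norm_le_iff_of_nonneg (by norm_num)] at hu
    have h0 := abs_le.1 (hu 0)
    have h1 := abs_le.1 (hu 1)
    refine ⟨!₂[u 0, u 1, √(1 - u 0 ^ 2 - u 1 ^ 2)], ?_, ?_⟩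
    · rw [mem_sphere_iff_sum_sq]
      simp only [cons_val_zero, cons_val_one, cons_val]
      rw [Real.sq_sqrt (by nlinarith)]
      ring
    · ext i
      fin_cases i <;> simp [P]
  intro h
  have := (measure_mono hsub).trans (hP.hausdorffMeasure_image_le zero_le_two _)
  rw [h, hausdorffMeasure_pi_fin_two, mul_zero, nonpos_iff_eq_zero] at this
  exact (measure_closedBall_pos volume (0 : Fin 2 → ℝ) (by norm_num : (0 : ℝ) < 1 / 2)).ne' this

instance : IsProbabilityMeasure (uniformSphere 2 : Measure (EuclideanSpace ℝ (Fin 3))) :=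
  isProbabilityMeasure_uniformSphere hausdorffMeasure_sphere_ne_zero hausdorffMeasure_sphere_ne_top

theorem integral_inner_sq_uniformSphere_two (v : EuclideanSpace ℝ (Fin 3)) :
    ∫ x, ⟪v, x⟫ ^ 2 ∂uniformSphere 2 = ‖v‖ ^ 2 / 3 := by
  have h := finrank_mul_integral_inner_sq (measurePreserving_uniformSphere 2)
    (ae_norm_eq_one_uniformSphere 2) v
  rw [finrank_euclideanSpace_fin, probReal_univ, mul_one] at h
  rw [← h]
  ring

theorem integral_integral_inner_euclideanCross_sq (r : EuclideanSpace ℝ (Fin 3)) :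
    ∫ a, ∫ b, ⟪euclideanCross r a, b⟫ ^ 2 ∂uniformSphere 2 ∂uniformSphere 2 =
      2 * ‖r‖ ^ 2 / 9 := by
  have hS := ae_norm_eq_one_uniformSphere (E := EuclideanSpace ℝ (Fin 3)) 2
  calc ∫ a, ∫ b, ⟪euclideanCross r a, b⟫ ^ 2 ∂uniformSphere 2 ∂uniformSphere 2
      = ∫ a, (‖r‖ ^ 2 - ⟪r, a⟫ ^ 2) / 3 ∂uniformSphere 2 :=
        integral_congr_ae <| hS.mono fun a ha => by
          dsimp only
          rw [integral_inner_sq_uniformSphere_two, norm_euclideanCross_sq, ha, one_pow, mul_one]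
    _ = 2 * ‖r‖ ^ 2 / 9 := by
      rw [integral_div, integral_sub (integrable_const _) (integrable_inner_sq hS r),
        integral_const, integral_inner_sq_uniformSphere_two, probReal_univ, one_smul]
      ring

/-- The averaged generalized Robertson bound for a non-maximally-mixed qubit
equals `2/9`, independent of the purity. -/
theorem averaged_gen_robertson_bound (ρ : Matrix (Fin 2) (Fin 2) ℂ)
    (hρ : ρ.PosSemidef) (hρtr : ρ.trace = 1)
    (hmm : ρ ≠ (1 / 2 : ℂ) • (1 : Matrix (Fin 2) (Fin 2) ℂ))
    (lmin lmax : ℝ)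
    (hmin : IsLeast (Set.range hρ.1.eigenvalues) lmin)
    (hmax : IsGreatest (Set.range hρ.1.eigenvalues) lmax) :
    (⨍ a in Metric.sphere (0 : EuclideanSpace ℝ (Fin 3)) 1,
      ⨍ b in Metric.sphere (0 : EuclideanSpace ℝ (Fin 3)) 1,
        ((lmax + lmin) ^ 2 / (4 * (lmax - lmin) ^ 2)) * ‖
          ((ρ * (pauliObs a * pauliObs b - pauliObs b * pauliObs a)).trace)‖ ^ 2
        ∂(μH[2]) ∂(μH[2])) = 2 / 9 := by
  have hH : ρ.IsHermitian := hρ.1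
  have hr : ‖blochVector ρ‖ ≠ 0 := norm_ne_zero_iff.2 (blochVector_ne_zero hH hρtr hmm)
  obtain ⟨hsum, hgap⟩ := isLeast_isGreatest_range_fin_two hmin hmax
  obtain ⟨hsum', hgap'⟩ := hH.eigenvalues_fin_two_of_trace_eq_one hρtr
  have hterm : ∀ a b, (lmax + lmin) ^ 2 / (4 * (lmax - lmin) ^ 2) *
      ‖(ρ * (pauliObs a * pauliObs b - pauliObs b * pauliObs a)).trace‖ ^ 2 =
        ⟪euclideanCross (blochVector ρ) a, b⟫ ^ 2 / ‖blochVector ρ‖ ^ 2 := fun a b => by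
    rw [hsum, hgap, hsum', hgap', norm_trace_mul_commutator_sq hH]
    field_simp
  simp only [setAverage_sphere_eq_integral, hterm, integral_div,
    integral_integral_inner_euclideanCross_sq]
  field_simp
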